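/- For smooth functions ψ on [-1,1], the modified Legendre differential operator L_c = d/dx[(1−x²) d/dx] − c² x² commutes with the finite Fourier transform operator F_c: for all x ∈ [-1,1], (F_c (L_c ψ))(x) = (L_c (F_c ψ))(x). -/

import Mathlib

/-- The finite Fourier transform operator `F_c` on functions on `[-1,1]`. -/
noncomputable def Fc (c : ℝ) (ψ : ℝ → ℂ) (x : ℝ) : ℂ :=
  ∫ y in (-1 : ℝ)..1, Complex.exp (Complex.I * c * x * y) * ψ y

/-- The modified Legendre differential operator
`L_c ψ = d/dx[(1−x²) ψ'] − c² x² ψ`. -/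
noncomputable def Lc (c : ℝ) (ψ : ℝ → ℂ) (x : ℝ) : ℂ :=
  deriv (fun t : ℝ => ((1 - (t : ℂ) ^ 2)) * deriv ψ t) x - (c : ℂ) ^ 2 * (x : ℂ) ^ 2 * ψ x

/-!
Applying `L_c` to the kernel `K(x, y) = exp(i c x y)` in the variable `y` gives the same result
as applying it in `x`, namely `(-2 i c x y - c² (x² + y² - x² y²)) K(x, y)`, because this factor
is symmetric in `x` and `y`. Moving `L_c` from `ψ` onto the kernel in `∫ K(x, y) (L_c ψ)(y) dy` is
Green's identity for `L_c` on `[-1, 1]`, whose boundary term carries the factor `1 - y²` and so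
vanishes; moving it out of the integral in `x` is differentiation under the integral sign.
-/

open Complex intervalIntegral

lemma hasDerivAt_one_sub_sq_mul {f : ℝ → ℂ} {f' : ℂ} {t : ℝ} (hf : HasDerivAt f f' t) :
    HasDerivAt (fun s : ℝ => (1 - (s : ℂ) ^ 2) * f s)
      (-(2 * t) * f t + (1 - (t : ℂ) ^ 2) * f') t := by
  have h : HasDerivAt (fun s : ℝ => 1 - (s : ℂ) ^ 2) (-(2 * (t : ℂ))) t := by
    simpa using ((hasDerivAt_id t).ofReal_comp.pow 2).const_sub (1 : ℂ)
  exact h.mul hf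

lemma Lc_apply_of_differentiableAt {c : ℝ} {u : ℝ → ℂ} {y : ℝ}
    (hu : DifferentiableAt ℝ (deriv u) y) :
    Lc c u y
      = -(2 * y) * deriv u y + (1 - (y : ℂ) ^ 2) * deriv (deriv u) y - c ^ 2 * y ^ 2 * u y := by
  rw [Lc, (hasDerivAt_one_sub_sq_mul hu.hasDerivAt).deriv]

lemma continuous_Lc (c : ℝ) {u : ℝ → ℂ} (hu : ContDiff ℝ 2 u) : Continuous (Lc c u) := by
  have : Continuous (deriv (deriv u)) := (hu.deriv' (n := 1)).continuous_deriv_one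
  have : Continuous (deriv u) := hu.continuous_deriv one_le_two
  have : Continuous u := hu.continuous
  simp_rw [funext fun y => Lc_apply_of_differentiableAt (c := c) (hu.differentiable_deriv_two y)]
  fun_prop

theorem integral_mul_Lc_eq_integral_Lc_mul (c : ℝ) {u v : ℝ → ℂ} (hu : ContDiff ℝ 2 u)
    (hv : ContDiff ℝ 2 v) :
    ∫ y in (-1 : ℝ)..1, u y * Lc c v y = ∫ y in (-1 : ℝ)..1, Lc c u y * v y := by
  -- Lagrange's identity; the `c²` terms cancel
  have hwronskian : ∀ t : ℝ,
      HasDerivAt (fun s : ℝ => (1 - (s : ℂ) ^ 2) * (u s * deriv v s - deriv u s * v s))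
        (u t * Lc c v t - Lc c u t * v t) t := by
    intro t
    have hu₁ := (hu.differentiable two_ne_zero t).hasDerivAt
    have hv₁ := (hv.differentiable two_ne_zero t).hasDerivAt
    have hu₂ := hu.differentiable_deriv_two t
    have hv₂ := hv.differentiable_deriv_two t
    refine (hasDerivAt_one_sub_sq_mul ((hu₁.mul hv₂.hasDerivAt).sub
      (hu₂.hasDerivAt.mul hv₁))).congr_deriv ?_
    rw [Lc_apply_of_differentiableAt hu₂, Lc_apply_of_differentiableAt hv₂]
    simp only [Pi.mul_apply, Pi.sub_apply]
    ring
  have hl : Continuous fun y => u y * Lc c v y := hu.continuous.mul (continuous_Lc c hv)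
  have hr : Continuous fun y => Lc c u y * v y := (continuous_Lc c hu).mul hv.continuous
  rw [← sub_eq_zero, ← integral_sub (hl.intervalIntegrable _ _) (hr.intervalIntegrable _ _),
    integral_eq_sub_of_hasDerivAt (fun t _ => hwronskian t) ((hl.sub hr).intervalIntegrable _ _)]
  norm_num

lemma hasDerivAt_cexp_mul (k : ℂ) (t : ℝ) :
    HasDerivAt (fun s : ℝ => cexp (k * s)) (k * cexp (k * t)) t := by
  simpa [mul_comm] using ((hasDerivAt_id t).ofReal_comp.const_mul k).cexp

lemma Lc_cexp_mul (c : ℝ) (k : ℂ) (y : ℝ) :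
    Lc c (fun t : ℝ => cexp (k * t)) y
      = (-(2 * y) * k + (1 - (y : ℂ) ^ 2) * k ^ 2 - c ^ 2 * y ^ 2) * cexp (k * y) := by
  have hd : deriv (fun t : ℝ => cexp (k * t)) = fun t : ℝ => k * cexp (k * t) :=
    funext fun t => (hasDerivAt_cexp_mul k t).deriv
  have hdd : HasDerivAt (fun t : ℝ => k * cexp (k * t)) (k * (k * cexp (k * y))) y :=
    (hasDerivAt_cexp_mul k y).const_mul k
  rw [Lc_apply_of_differentiableAt (by rw [hd]; exact hdd.differentiableAt), hd, hdd.deriv]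
  ring

lemma hasDerivAt_Fc (c : ℝ) {f : ℝ → ℂ} (hf : Continuous f) (x : ℝ) :
    HasDerivAt (Fc c f) (Fc c (fun y => I * c * y * f y) x) x := by
  have hbound : ∀ y ∈ Set.uIoc (-1 : ℝ) 1, ∀ x' : ℝ,
      ‖cexp (I * c * x' * y) * (I * c * y * f y)‖ ≤ |c| * ‖f y‖ := by
    intro y hy x'
    rw [Set.uIoc_of_le (by norm_num)] at hy
    have hy1 : |y| ≤ 1 := abs_le.mpr ⟨hy.1.le, hy.2⟩
    rw [norm_mul, show I * c * x' * y = ((c * x' * y : ℝ) : ℂ) * I by push_cast; ring,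
      norm_exp_ofReal_mul_I, one_mul]
    simp only [norm_mul, norm_I, norm_real, Real.norm_eq_abs, one_mul]
    gcongr
    exact mul_le_of_le_one_right (abs_nonneg c) hy1
  have hderiv : ∀ y x' : ℝ, HasDerivAt (fun s : ℝ => cexp (I * c * s * y) * f y)
      (cexp (I * c * x' * y) * (I * c * y * f y)) x' := by
    intro y x'
    have h := (hasDerivAt_cexp_mul (I * c * y) x').mul_const (f y)
    simp only [mul_right_comm (I * (c : ℂ)) (y : ℂ)] at h
    exact h.congr_deriv (by ring)
  exact (hasDerivAt_integral_of_dominated_loc_of_deriv_le (bound := fun y => |c| * ‖f y‖)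
    Filter.univ_mem
    (Filter.Eventually.of_forall fun _ => (Continuous.aestronglyMeasurable (by fun_prop)))
    (Continuous.intervalIntegrable (by fun_prop) _ _)
    (Continuous.aestronglyMeasurable (by fun_prop))
    (Filter.Eventually.of_forall fun y hy x' _ => hbound y hy x')
    (Continuous.intervalIntegrable (by fun_prop) _ _)
    (Filter.Eventually.of_forall fun y _ x' _ => hderiv y x')).2

lemma Lc_Fc_eq_integral (c : ℝ) {f : ℝ → ℂ} (hf : Continuous f) (x : ℝ) :
    Lc c (Fc c f) x = ∫ y in (-1 : ℝ)..1,
      (-(2 * x) * (I * c * y) + (1 - (x : ℂ) ^ 2) * (I * c * y) ^ 2 - c ^ 2 * x ^ 2)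
        * cexp (I * c * x * y) * f y := by
  have hd : ∀ g : ℝ → ℂ, Continuous g → deriv (Fc c g) = Fc c (fun y => I * c * y * g y) :=
    fun g hg => funext fun t => (hasDerivAt_Fc c hg t).deriv
  have hg : Continuous fun y : ℝ => I * c * y * f y := by fun_prop
  have hdiff : DifferentiableAt ℝ (deriv (Fc c f)) x := by
    rw [hd f hf]
    exact (hasDerivAt_Fc c hg x).differentiableAt
  rw [Lc_apply_of_differentiableAt hdiff, hd f hf, hd _ hg]
  simp only [Fc, ← integral_const_mul]
  rw [← integral_add, ← integral_sub]
  · refine integral_congr fun y _ => ?_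
    ring
  all_goals exact Continuous.intervalIntegrable (by fun_prop) _ _

theorem Fc_commutes_with_Lc_general (c : ℝ) (ψ : ℝ → ℂ) (hψ : ContDiff ℝ 2 ψ) :
    ∀ x ∈ Set.Icc (-1 : ℝ) 1, Fc c (Lc c ψ) x = Lc c (Fc c ψ) x := by
  intro x _
  calc Fc c (Lc c ψ) x
      = ∫ y in (-1 : ℝ)..1, Lc c (fun t : ℝ => cexp (I * c * x * t)) y * ψ y :=
        integral_mul_Lc_eq_integral_Lc_mul c (contDiff_const.mul ofRealCLM.contDiff).cexp hψ
    _ = ∫ y in (-1 : ℝ)..1,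
          (-(2 * y) * (I * c * x) + (1 - (y : ℂ) ^ 2) * (I * c * x) ^ 2 - c ^ 2 * y ^ 2)
            * cexp (I * c * x * y) * ψ y := by
        simp only [Lc_cexp_mul]
    _ = ∫ y in (-1 : ℝ)..1,
          (-(2 * x) * (I * c * y) + (1 - (x : ℂ) ^ 2) * (I * c * y) ^ 2 - c ^ 2 * x ^ 2)
            * cexp (I * c * x * y) * ψ y :=
        integral_congr fun y _ => by
          linear_combination (c ^ 2 * (x ^ 2 - y ^ 2) * cexp (I * c * x * y) * ψ y) * I_sq
    _ = Lc c (Fc c ψ) x := (Lc_Fc_eq_integral c hψ.continuous x).symm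

/-- For twice continuously differentiable `ψ`, the modified Legendre differential operator `L_c`
commutes with the finite Fourier transform `F_c`:
`(F_c (L_c ψ))(x) = (L_c (F_c ψ))(x)` for all `x ∈ [-1,1]`. -/
theorem Fc_commutes_with_Lc (c : ℝ) (hc : 0 < c) (ψ : ℝ → ℂ) (hψ : ContDiff ℝ 2 ψ) :
    ∀ x ∈ Set.Icc (-1 : ℝ) 1, Fc c (Lc c ψ) x = Lc c (Fc c ψ) x :=
  Fc_commutes_with_Lc_general c ψ hψ
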